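/- arXiv:1508.05834 — 3 statements merged into one kernel-verified Lean document; each statement's English description precedes it below -/
import Mathlib

section
/- For every integer r ≥ 4 and positive integer N, the graph G¹_{r,N}, obtained from the undirected de Bruijn graph D_{N(r-2)², r-2} by attaching to each of its vertices exactly 2N disjoint copies of K_{r-1} (identifying one vertex of each copy with that vertex), has diameter at most r, maximum degree at most 2N(r-1)(r-2), and at least 2N·(N(r-2)²)^{r-2}·(r-2) vertices of degree r−2. -/
def shiftRel (t k : ℕ) (u v : Fin k → Fin t) : Prop :=
  ∀ (i : ℕ) (h : i + 1 < k), u ⟨i, Nat.lt_of_succ_lt h⟩ = v ⟨i + 1, h⟩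

/-- The undirected de Bruijn graph of type `(t, k)`. -/
def deBruijn (t k : ℕ) : SimpleGraph (Fin k → Fin t) where
  Adj u v := u ≠ v ∧ (shiftRel t k u v ∨ shiftRel t k v u)
  symm := ⟨fun _ _ h => ⟨h.1.symm, h.2.symm⟩⟩
  loopless := ⟨fun _ h => h.1 rfl⟩

/-- The graph obtained from the de Bruijn graph `D_{t,k}` by attaching, at each of its
vertices, `m` disjoint cliques on `s + 1` vertices (one vertex of each clique being
identified with the corresponding de Bruijn vertex, `s` new vertices per clique). -/
def attachCliques (t k m s : ℕ) :
    SimpleGraph ((Fin k → Fin t) ⊕ ((Fin k → Fin t) × Fin m × Fin s)) where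
  Adj x y :=
    match x, y with
    | .inl u, .inl v => (deBruijn t k).Adj u v
    | .inl u, .inr (v, _, _) => u = v
    | .inr (v, _, _), .inl u => u = v
    | .inr (v, j, i), .inr (v', j', i') => v = v' ∧ j = j' ∧ i ≠ i'
  symm := by
    refine ⟨?_⟩
    rintro (u | ⟨v, j, i⟩) (u' | ⟨v', j', i'⟩) h
    · exact (deBruijn t k).adj_symm h
    · exact h
    · exact h
    · exact ⟨h.1.symm, h.2.1.symm, h.2.2.symm⟩
  loopless := by
    refine ⟨?_⟩
    rintro (u | ⟨v, j, i⟩) h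
    · exact (deBruijn t k).irrefl h
    · exact h.2.2 rfl

/-- The graph `G¹_{r,N}`: the de Bruijn graph `D_{N(r-2)², r-2}` with `2N` copies of
`K_{r-1}` attached at each of its vertices. -/
def G1 (r N : ℕ) :=
  attachCliques (N * (r - 2) ^ 2) (r - 2) (2 * N) (r - 2)

/-!
Consecutive length-`k` windows of the word `uv` are shift-related, so sliding a window from `u`
to `v` is a walk of length at most `k` in `D_{t,k}`; as every clique vertex is adjacent to its
root, `attachCliques t k m s` has diameter at most `k + 2`. A de Bruijn word has at most `t`
successors and `t` predecessors, each determined by the one letter it does not share with the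
word, so a root has degree at most `2t + ms`, while each of the `t^k m s` clique vertices has
degree exactly `s`. For `G¹_{r,N}` these numbers are `k = s = r - 2`, `t = N(r-2)²`, `m = 2N`.
-/

namespace SimpleGraph

lemma Hom.edist_le {V W : Type*} {G : SimpleGraph V} {G' : SimpleGraph W} (f : G →g G')
    (u v : V) : G'.edist (f u) (f v) ≤ G.edist u v := by
  by_cases h : G.Reachable u v
  · obtain ⟨p, hp⟩ := h.exists_walk_length_eq_edist
    rw [← hp, ← Walk.length_map f p]
    exact SimpleGraph.edist_le _
  · rw [edist_eq_top_of_not_reachable h]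
    exact le_top

end SimpleGraph

open SimpleGraph

namespace deBruijn

variable {t k : ℕ}

def window {n : ℕ} (w : Fin (k + n) → Fin t) (j : ℕ) (hj : j ≤ n) : Fin k → Fin t :=
  fun i => w ⟨i + j, by omega⟩

lemma shiftRel_window_succ {n : ℕ} (w : Fin (k + n) → Fin t) (j : ℕ) (hj : j + 1 ≤ n) :
    shiftRel t k (window w (j + 1) hj) (window w j (by omega)) :=
  fun i _ => congrArg w (Fin.ext (by simp only; omega))

lemma edist_window_le {n : ℕ} (w : Fin (k + n) → Fin t) (j : ℕ) (hj : j ≤ n) :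
    (deBruijn t k).edist (window w 0 n.zero_le) (window w j hj) ≤ j := by
  induction j with
  | zero => simp
  | succ j ih =>
    have hstep : (deBruijn t k).edist (window w j (by omega)) (window w (j + 1) hj) ≤ 1 := by
      rw [edist_le_one_iff_adj_or_eq]
      by_cases h : window w j (by omega) = window w (j + 1) hj
      · exact Or.inr h
      · exact Or.inl ⟨h, Or.inr (shiftRel_window_succ w j hj)⟩
    calc _ ≤ _ := (deBruijn t k).edist_triangle
      _ ≤ (j : ℕ∞) + 1 := add_le_add (ih (by omega)) hstep
      _ = _ := by push_cast; rfl

lemma edist_le (u v : Fin k → Fin t) : (deBruijn t k).edist u v ≤ k := by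
  have hu : window (Fin.append u v) 0 k.zero_le = u := by
    funext i
    exact Fin.append_left u v i
  have hv : window (Fin.append u v) k le_rfl = v := by
    funext i
    rw [← Fin.append_right u v i]
    exact congrArg (Fin.append u v) (Fin.ext (Nat.add_comm i k))
  simpa only [hu, hv] using edist_window_le (Fin.append u v) k le_rfl

lemma ncard_setOf_shiftRel_left_le (hk : 0 < k) (u : Fin k → Fin t) :
    {v | shiftRel t k u v}.ncard ≤ t := by
  have hinj : Set.InjOn (fun v : Fin k → Fin t => v ⟨0, hk⟩) {v | shiftRel t k u v} := by
    intro a ha b hb hab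
    funext ⟨i, hi⟩
    cases i with
    | zero => exact hab
    | succ i => rw [← ha i hi, ← hb i hi]
  simpa using Set.ncard_le_ncard_of_injOn _ (fun _ _ => Set.mem_univ _) hinj

lemma ncard_setOf_shiftRel_right_le (hk : 0 < k) (u : Fin k → Fin t) :
    {v | shiftRel t k v u}.ncard ≤ t := by
  have hinj : Set.InjOn (fun v : Fin k → Fin t => v ⟨k - 1, by omega⟩)
      {v | shiftRel t k v u} := by
    intro a ha b hb hab
    funext ⟨i, hi⟩
    by_cases h : i + 1 < k
    · rw [ha i h, hb i h]
    · obtain rfl : i = k - 1 := by omega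
      exact hab
  simpa using Set.ncard_le_ncard_of_injOn _ (fun _ _ => Set.mem_univ _) hinj

lemma ncard_neighborSet_le (u : Fin k → Fin t) :
    ((deBruijn t k).neighborSet u).ncard ≤ 2 * t := by
  rcases Nat.eq_zero_or_pos k with rfl | hk
  · simp only [IsIsolated.of_subsingleton, IsIsolated.neighborSet_eq_empty, Set.ncard_empty,
      zero_le]
  calc _ ≤ ({v | shiftRel t k u v} ∪ {v | shiftRel t k v u}).ncard :=
        Set.ncard_le_ncard (fun v h => h.2)
    _ ≤ t + t := (Set.ncard_union_le _ _).trans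
        (add_le_add (ncard_setOf_shiftRel_left_le hk u) (ncard_setOf_shiftRel_right_le hk u))
    _ = 2 * t := (two_mul t).symm

end deBruijn

namespace attachCliques

variable {t k m s : ℕ}

def inlHom (t k m s : ℕ) : deBruijn t k →g attachCliques t k m s where
  toFun := Sum.inl
  map_rel' h := h

def root : (Fin k → Fin t) ⊕ ((Fin k → Fin t) × Fin m × Fin s) → Fin k → Fin t
  | .inl u => u
  | .inr (u, _, _) => u

lemma edist_root_le (x : (Fin k → Fin t) ⊕ ((Fin k → Fin t) × Fin m × Fin s)) :
    (attachCliques t k m s).edist x (.inl (root x)) ≤ 1 := by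
  rw [edist_le_one_iff_adj_or_eq]
  rcases x with u | ⟨u, j, i⟩
  · exact Or.inr rfl
  · exact Or.inl rfl

lemma edist_le (x y : (Fin k → Fin t) ⊕ ((Fin k → Fin t) × Fin m × Fin s)) :
    (attachCliques t k m s).edist x y ≤ k + 2 := by
  have hroots : (attachCliques t k m s).edist (.inl (root x)) (.inl (root y)) ≤ k :=
    ((inlHom t k m s).edist_le _ _).trans (deBruijn.edist_le _ _)
  have hy : (attachCliques t k m s).edist (.inl (root y)) y ≤ 1 :=
    SimpleGraph.edist_comm.trans_le (edist_root_le y)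
  calc (attachCliques t k m s).edist x y
      ≤ (attachCliques t k m s).edist x (.inl (root y)) +
          (attachCliques t k m s).edist (.inl (root y)) y := (attachCliques t k m s).edist_triangle
    _ ≤ (attachCliques t k m s).edist x (.inl (root x)) +
          (attachCliques t k m s).edist (.inl (root x)) (.inl (root y)) +
          (attachCliques t k m s).edist (.inl (root y)) y :=
        add_le_add_left (attachCliques t k m s).edist_triangle _
    _ ≤ 1 + k + 1 := add_le_add (add_le_add (edist_root_le x) hroots) hy
    _ = k + 2 := by ring

lemma neighborSet_inl (u : Fin k → Fin t) :
    (attachCliques t k m s).neighborSet (.inl u) =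
      .inl '' (deBruijn t k).neighborSet u ∪ Set.range fun q : Fin m × Fin s => .inr (u, q) := by
  ext (v | ⟨v, j, i⟩)
  · simp [SimpleGraph.mem_neighborSet, attachCliques]
  · simp [SimpleGraph.mem_neighborSet, attachCliques, eq_comm]

lemma neighborSet_inr (u : Fin k → Fin t) (j : Fin m) (i : Fin s) :
    (attachCliques t k m s).neighborSet (.inr (u, j, i)) =
      insert (.inl u) ((fun i' => .inr (u, j, i')) '' {i}ᶜ) := by
  ext (v | ⟨v, j', i'⟩)
  · simp [SimpleGraph.mem_neighborSet, attachCliques, eq_comm]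
  · simp only [mem_neighborSet, attachCliques, Set.mem_insert_iff, reduceCtorEq, false_or,
      Set.mem_image, Set.mem_compl_singleton_iff, Sum.inr.injEq, Prod.mk.injEq]
    constructor
    · rintro ⟨rfl, rfl, hi⟩
      exact ⟨i', Ne.symm hi, rfl, rfl, rfl⟩
    · rintro ⟨i', hi, rfl, rfl, rfl⟩
      exact ⟨rfl, rfl, Ne.symm hi⟩

lemma ncard_neighborSet_inr (u : Fin k → Fin t) (j : Fin m) (i : Fin s) :
    ((attachCliques t k m s).neighborSet (.inr (u, j, i))).ncard = s := by
  rw [neighborSet_inr, Set.ncard_insert_of_notMem (by simp),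
    Set.ncard_image_of_injective _ (fun a b h => by simpa using h), Set.ncard_compl]
  simp only [Nat.card_eq_fintype_card, Fintype.card_fin, Set.ncard_singleton]
  have := i.pos
  omega

lemma ncard_neighborSet_le (x : (Fin k → Fin t) ⊕ ((Fin k → Fin t) × Fin m × Fin s)) :
    ((attachCliques t k m s).neighborSet x).ncard ≤ 2 * t + m * s := by
  rcases x with u | ⟨u, j, i⟩
  · rw [neighborSet_inl]
    calc _ ≤ _ := Set.ncard_union_le _ _
      _ ≤ 2 * t + m * s := by
        gcongr
        · exact (Set.ncard_image_le (Set.toFinite _)).trans (deBruijn.ncard_neighborSet_le u)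
        · exact (Set.ncard_range_of_injective (fun a b h => by simpa using h)).trans_le (by simp)
  · rw [ncard_neighborSet_inr]
    exact (Nat.le_mul_of_pos_left s j.pos).trans (Nat.le_add_left _ _)

lemma le_ncard_setOf_ncard_neighborSet_eq :
    t ^ k * (m * s) ≤ {x | ((attachCliques t k m s).neighborSet x).ncard = s}.ncard := by
  calc t ^ k * (m * s) = (Set.range (Sum.inr (α := Fin k → Fin t) :
          (Fin k → Fin t) × Fin m × Fin s → _)).ncard := by
        rw [Set.ncard_range_of_injective Sum.inr_injective]
        simp
    _ ≤ _ := Set.ncard_le_ncard (by rintro _ ⟨⟨u, j, i⟩, rfl⟩; exact ncard_neighborSet_inr u j i)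

end attachCliques

theorem stmt_13_general (r N : ℕ) (hr : 4 ≤ r) :
    (∀ u v, ∃ p : (G1 r N).Walk u v, p.length ≤ r) ∧
    (∀ v, {u | (G1 r N).Adj v u}.ncard ≤ 2 * N * (r - 1) * (r - 2)) ∧
    2 * N * (N * (r - 2) ^ 2) ^ (r - 2) * (r - 2) ≤
      {v | {u | (G1 r N).Adj v u}.ncard = r - 2}.ncard := by
  obtain ⟨k, rfl⟩ : ∃ k, r = k + 2 := ⟨r - 2, by omega⟩
  simp only [Nat.add_sub_cancel, show k + 2 - 1 = k + 1 by omega]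
  refine ⟨fun u v => ?_, fun v => ?_, ?_⟩
  · obtain ⟨p, hp⟩ := exists_walk_of_edist_ne_top (ne_top_of_le_ne_top (by simp)
      (attachCliques.edist_le u v))
    exact ⟨p, by exact_mod_cast hp.trans_le (attachCliques.edist_le u v)⟩
  · calc _ ≤ 2 * (N * k ^ 2) + 2 * N * k := attachCliques.ncard_neighborSet_le v
      _ = _ := by ring
  · calc _ = (N * k ^ 2) ^ k * (2 * N * k) := by ring
      _ ≤ _ := attachCliques.le_ncard_setOf_ncard_neighborSet_eq

theorem stmt_13 (r N : ℕ) (hr : 4 ≤ r) (hN : 1 ≤ N) :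
    (∀ u v, ∃ p : (G1 r N).Walk u v, p.length ≤ r) ∧
    (∀ v, {u | (G1 r N).Adj v u}.ncard ≤ 2 * N * (r - 1) * (r - 2)) ∧
    2 * N * (N * (r - 2) ^ 2) ^ (r - 2) * (r - 2) ≤
      {v | {u | (G1 r N).Adj v u}.ncard = r - 2}.ncard :=
  stmt_13_general r N hr
end

section
/- For every integer r ≥ 9 and every constant C₀ ≥ 0, there exist graphs G with arbitrarily large maximum degree Δ(G), with minimum degree δ(G) = r−2 and diameter at most r, such that G admits no r-distant set distinguishing total colouring using at most Δ(G) + C₀ colours. Consequently, any theorem asserting χ''_{a,r}(G) ≤ Δ(G) + C₀ for all graphs with δ(G) ≥ δ₀ must have δ₀ ≥ r−1. -/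
/-- The degree of a vertex (as the number of its neighbours). -/
noncomputable def degOf {V : Type*} (G : SimpleGraph V) (v : V) : ℕ :=
  {u | G.Adj v u}.ncard

/-- The maximum degree `Δ(G)`. -/
noncomputable def maxDeg {V : Type*} (G : SimpleGraph V) : ℕ :=
  sSup (Set.range (degOf G))

/-- The minimum degree `δ(G)`. -/
noncomputable def minDeg {V : Type*} (G : SimpleGraph V) : ℕ :=
  sInf (Set.range (degOf G))

/-- The pallet of a vertex under a total colouring: its own colour together with the
colours of its incident edges. -/
def pallet {V : Type*} (G : SimpleGraph V) (cv : V → ℕ) (ce : Sym2 V → ℕ) (v : V) : Set ℕ :=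
  {cv v} ∪ ce '' G.incidenceSet v

/-- `cv, ce` form a proper total colouring of `G`. -/
def IsProperTotal {V : Type*} (G : SimpleGraph V) (cv : V → ℕ) (ce : Sym2 V → ℕ) : Prop :=
  (∀ u v, G.Adj u v → cv u ≠ cv v) ∧
  (∀ e f, e ∈ G.edgeSet → f ∈ G.edgeSet → e ≠ f → (∃ w, w ∈ e ∧ w ∈ f) → ce e ≠ ce f) ∧
  (∀ v, ∀ e ∈ G.incidenceSet v, cv v ≠ ce e)

/-- `cv, ce` form an `r`-distant set distinguishing total colouring of `G` with colours
`1, …, k`. -/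
def IsRDistSetDist {V : Type*} (G : SimpleGraph V) (r k : ℕ)
    (cv : V → ℕ) (ce : Sym2 V → ℕ) : Prop :=
  IsProperTotal G cv ce ∧
  (∀ v, cv v ∈ Set.Icc 1 k) ∧ (∀ e ∈ G.edgeSet, ce e ∈ Set.Icc 1 k) ∧
  ∀ u v, 1 ≤ G.dist u v → G.dist u v ≤ r → pallet G cv ce u ≠ pallet G cv ce v

/-!
In `G¹_{r,N}` any two vertices are joined by a walk of length at most `r` (through the de Bruijn
words), so an `r`-distant set distinguishing colouring gives all vertices distinct pallets. Each of
the `2N (N m²)^m m` clique vertices (`m = r - 2`) has degree `m`, so its pallet is an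
`(m+1)`-subset of at most `Δ + C₀ ≤ 3 N m²` colours once `C₀ ≤ N`. There are at most
`(3 N m²)^(m+1) / (m+1)!` such subsets, fewer than the clique vertices because
`3^(m+1) m < 2 (m+1)!` for `m ≥ 7`, i.e. `r ≥ 9`. As `δ(G¹_{r,N}) = r - 2`, no `δ₀ ≤ r - 2` works.
-/

open SimpleGraph
open scoped Nat

section Degrees

variable {V : Type*} (G : SimpleGraph V)

lemma degOf_le_maxDeg [Finite V] (v : V) : degOf G v ≤ maxDeg G :=
  le_csSup (Set.finite_range _).bddAbove (Set.mem_range_self v)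

lemma maxDeg_le [Nonempty V] {D : ℕ} (h : ∀ v, degOf G v ≤ D) : maxDeg G ≤ D :=
  csSup_le (Set.range_nonempty _) (Set.forall_mem_range.2 h)

lemma minDeg_eq {d : ℕ} (h : ∀ v, d ≤ degOf G v) (v : V) (hv : degOf G v = d) :
    minDeg G = d :=
  le_antisymm (Nat.sInf_le ⟨v, hv⟩) (le_csInf ⟨d, v, hv⟩ (Set.forall_mem_range.2 h))

end Degrees

section Pallets

variable {V : Type*} {G : SimpleGraph V} {cv : V → ℕ} {ce : Sym2 V → ℕ} {r k : ℕ}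

lemma IsProperTotal.ncard_pallet [Finite V] (h : IsProperTotal G cv ce) (v : V) :
    (pallet G cv ce v).ncard = degOf G v + 1 := by
  classical
  obtain ⟨-, hedge, hinc⟩ := h
  have hdisj : Disjoint {cv v} (ce '' G.incidenceSet v) := by
    rw [Set.disjoint_singleton_left]
    rintro ⟨e, he, hce⟩
    exact hinc v e he hce.symm
  have hinj : Set.InjOn ce (G.incidenceSet v) := fun e he f hf hef =>
    by_contra fun hne => hedge e f he.1 hf.1 hne ⟨v, he.2, hf.2⟩ hef
  rw [pallet, Set.ncard_union_eq hdisj, Set.ncard_singleton, hinj.ncard_image,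
    add_comm, degOf, ← Nat.card_coe_set_eq, ← Nat.card_coe_set_eq]
  exact congrArg (· + 1) (Nat.card_congr (G.incidenceSetEquivNeighborSet v))

lemma IsRDistSetDist.pallet_subset (h : IsRDistSetDist G r k cv ce) (v : V) :
    pallet G cv ce v ⊆ Set.Icc 1 k := by
  rintro _ (rfl | ⟨e, he, rfl⟩)
  exacts [h.2.1 v, h.2.2.1 e he.1]

lemma IsRDistSetDist.pallet_injective (h : IsRDistSetDist G r k cv ce)
    (hdiam : ∀ u v : V, ∃ p : G.Walk u v, p.length ≤ r) : Function.Injective (pallet G cv ce) := by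
  intro u v huv
  by_contra hne
  obtain ⟨p, hp⟩ := hdiam u v
  exact h.2.2.2 u v (p.reachable.pos_dist_of_ne hne) ((dist_le p).trans hp) huv

theorem IsRDistSetDist.ncard_le_choose [Finite V] (h : IsRDistSetDist G r k cv ce)
    (hdiam : ∀ u v : V, ∃ p : G.Walk u v, p.length ≤ r) {S : Set V} {d : ℕ}
    (hS : ∀ v ∈ S, degOf G v = d) : S.ncard ≤ k.choose (d + 1) := by
  classical
  let f : V → Finset ℕ := fun v => (Finset.Icc 1 k).filter (· ∈ pallet G cv ce v)
  have hf : ∀ v, (f v : Set ℕ) = pallet G cv ce v := fun v => by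
    ext x
    simp only [f, Finset.coe_filter, Finset.mem_Icc, Set.mem_ofPred_eq]
    exact ⟨And.right, fun hx => ⟨h.pallet_subset v hx, hx⟩⟩
  have hmaps : ∀ v ∈ S, f v ∈ (Finset.Icc 1 k).powersetCard (d + 1) := fun v hv => by
    rw [Finset.mem_powersetCard, ← Finset.coe_subset, ← Set.ncard_coe_finset, hf,
      h.1.ncard_pallet, hS v hv, Finset.coe_Icc]
    exact ⟨h.pallet_subset v, rfl⟩
  have hinj : Set.InjOn f S := fun u _ v _ huv =>
    h.pallet_injective hdiam (by rw [← hf, ← hf, huv])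
  calc S.ncard ≤ ((Finset.Icc 1 k).powersetCard (d + 1) : Set (Finset ℕ)).ncard :=
        Set.ncard_le_ncard_of_injOn f hmaps hinj
    _ = k.choose (d + 1) := by simp

end Pallets

lemma three_pow_mul_lt_two_mul_factorial {m : ℕ} (hm : 7 ≤ m) :
    3 ^ (m + 1) * m < 2 * (m + 1)! := by
  induction m, hm using Nat.le_induction with
  | base => decide
  | succ m hm ih =>
    have key : m * (3 ^ (m + 2) * (m + 1)) < m * (2 * (m + 2)!) :=
      calc m * (3 ^ (m + 2) * (m + 1)) = 3 * (m + 1) * (3 ^ (m + 1) * m) := by ring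
        _ < 3 * (m + 1) * (2 * (m + 1)!) := Nat.mul_lt_mul_of_pos_left ih (by positivity)
        _ ≤ m * (m + 2) * (2 * (m + 1)!) := Nat.mul_le_mul_right _ (by nlinarith)
        _ = m * (2 * (m + 2)!) := by rw [Nat.factorial_succ (m + 1)]; ring
    exact Nat.lt_of_mul_lt_mul_left key

lemma choose_lt_of_le_three_mul_sq {m N k : ℕ} (hm : 7 ≤ m) (hN : 0 < N)
    (hk : k ≤ 3 * N * m ^ 2) :
    k.choose (m + 1) < 2 * N ^ (m + 1) * m ^ (2 * m + 1) := by
  have hfact : (m + 1)! * k.choose (m + 1) ≤ k ^ (m + 1) := by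
    rw [← Nat.descFactorial_eq_factorial_mul_choose]
    exact Nat.descFactorial_le_pow k _
  have hpos : 0 < N ^ (m + 1) * m ^ (2 * m + 1) := by positivity
  refine Nat.lt_of_mul_lt_mul_left (a := (m + 1)!) ?_
  calc (m + 1)! * k.choose (m + 1) ≤ (3 * N * m ^ 2) ^ (m + 1) :=
        hfact.trans (Nat.pow_le_pow_left hk _)
    _ = 3 ^ (m + 1) * m * (N ^ (m + 1) * m ^ (2 * m + 1)) := by ring
    _ < 2 * (m + 1)! * (N ^ (m + 1) * m ^ (2 * m + 1)) :=
        Nat.mul_lt_mul_of_pos_right (three_pow_mul_lt_two_mul_factorial hm) hpos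
    _ = (m + 1)! * (2 * N ^ (m + 1) * m ^ (2 * m + 1)) := by ring

namespace DeBruijn

variable {m A T : ℕ}

abbrev Word (m A : ℕ) := Fin m → Fin A

def IsShiftBy (k : ℕ) (u v : Word m A) : Prop :=
  ∀ i (h : i + k < m), v ⟨i, by omega⟩ = u ⟨i + k, h⟩

lemma IsShiftBy.eq {u v : Word m A} (h : IsShiftBy 0 u v) : u = v :=
  funext fun i => (h i i.2).symm

lemma isShiftBy_length (u v : Word m A) : IsShiftBy m u v :=
  fun _ h => absurd h (by omega)

lemma IsShiftBy.exists_isShiftBy_one {k : ℕ} {u v : Word m A} (h : IsShiftBy (k + 1) u v) :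
    ∃ w, IsShiftBy 1 u w ∧ IsShiftBy k w v := by
  refine ⟨fun i => if hi : i.1 + 1 < m then u ⟨i + 1, hi⟩ else v ⟨m - 1 - k, by omega⟩,
    fun i hi => dif_pos hi, fun i hik => ?_⟩
  by_cases hi : i + k + 1 < m
  · simp only [dif_pos hi]
    exact h i hi
  · simp only [dif_neg hi]
    congr 1
    ext
    simp only
    omega

lemma ncard_le_of_injOn_eval {S : Set (Word m A)} (i : Fin m) (h : S.InjOn (· i)) :
    S.ncard ≤ A := by
  simpa using Set.ncard_le_ncard_of_injOn _ (fun _ _ => Set.mem_univ _) h Set.finite_univ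

lemma ncard_outShifts_le (hm : 0 < m) (u : Word m A) :
    {v | IsShiftBy 1 u v}.ncard ≤ A := by
  refine ncard_le_of_injOn_eval ⟨m - 1, by omega⟩ fun v hv v' hv' hvv' => funext fun i => ?_
  by_cases hi : i.1 + 1 < m
  · exact (hv i hi).trans (hv' i hi).symm
  · rw [show i = ⟨m - 1, by omega⟩ from Fin.ext (by simp only; omega)]
    exact hvv'

lemma ncard_inShifts_le (hm : 0 < m) (u : Word m A) :
    {v | IsShiftBy 1 v u}.ncard ≤ A := by
  refine ncard_le_of_injOn_eval ⟨0, hm⟩ fun v hv v' hv' hvv' => funext fun i => ?_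
  obtain ⟨_ | j, hj⟩ := i
  · exact hvv'
  · exact (hv j hj).symm.trans (hv' j hj)


abbrev Vertex (m A T : ℕ) := Word m A ⊕ (Word m A × Fin T × Fin m)

def Adj : Vertex m A T → Vertex m A T → Prop
  | .inl u, .inl v => u ≠ v ∧ (IsShiftBy 1 u v ∨ IsShiftBy 1 v u)
  | .inl u, .inr p => u = p.1
  | .inr p, .inl u => p.1 = u
  | .inr p, .inr q => p.1 = q.1 ∧ p.2.1 = q.2.1 ∧ p.2.2 ≠ q.2.2

/-- `graph m (N * m ^ 2) (2 * N)` is the paper's `G¹_{m+2,N}`: the de Bruijn graph on words of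
length `m` over `A` letters, where the `t`-th copy of `K_{m+1}` attached at the word `w` consists
of `w` and the clique on the vertices `(w, t, i)`, `i : Fin m`. -/
def graph (m A T : ℕ) : SimpleGraph (Vertex m A T) where
  Adj := Adj
  symm := by
    constructor
    rintro (u | p) (v | q) h
    exacts [⟨h.1.symm, h.2.symm⟩, h.symm, h.symm, ⟨h.1.symm, h.2.1.symm, h.2.2.symm⟩]
  loopless := by
    constructor
    rintro (u | p) h
    exacts [h.1 rfl, h.2.2 rfl]

@[simp] lemma adj_inl_inl {u v : Word m A} :
    (graph m A T).Adj (.inl u) (.inl v) ↔ u ≠ v ∧ (IsShiftBy 1 u v ∨ IsShiftBy 1 v u) := Iff.rfl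

@[simp] lemma adj_inl_inr {u : Word m A} {p : Word m A × Fin T × Fin m} :
    (graph m A T).Adj (.inl u) (.inr p) ↔ u = p.1 := Iff.rfl

@[simp] lemma adj_inr_inl {u : Word m A} {p : Word m A × Fin T × Fin m} :
    (graph m A T).Adj (.inr p) (.inl u) ↔ p.1 = u := Iff.rfl

@[simp] lemma adj_inr_inr {p q : Word m A × Fin T × Fin m} :
    (graph m A T).Adj (.inr p) (.inr q) ↔ p.1 = q.1 ∧ p.2.1 = q.2.1 ∧ p.2.2 ≠ q.2.2 := Iff.rfl

lemma degOf_inr (w : Word m A) (t : Fin T) (i : Fin m) :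
    degOf (graph m A T) (.inr (w, t, i)) = m := by
  have hnbhd : {x | (graph m A T).Adj (.inr (w, t, i)) x}
      = insert (.inl w) ((fun j => .inr (w, t, j)) '' {i}ᶜ) := by
    ext (v | ⟨w', t', j⟩)
    · simp [eq_comm]
    · simp only [Set.mem_ofPred_eq, adj_inr_inr, ne_eq, Set.mem_insert_iff, eq_comm,
        reduceCtorEq, Set.mem_image, Set.mem_compl_iff, Set.mem_singleton_iff, Sum.inr.injEq,
        Prod.mk.injEq, ↓existsAndEq, and_true, false_or]
      tauto
  rw [degOf, hnbhd, Set.ncard_insert_of_notMem (by simp),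
    Set.ncard_image_of_injective _ (fun j j' h => by simpa using h), Set.ncard_compl,
    Set.ncard_singleton, Nat.card_eq_fintype_card, Fintype.card_fin]
  have := i.pos
  omega

lemma degOf_inl (w : Word m A) :
    degOf (graph m A T) (.inl w)
      = {v | (graph m A T).Adj (.inl w) (.inl v)}.ncard + T * m := by
  have hnbhd : {x | (graph m A T).Adj (.inl w) x}
      = .inl '' {v | (graph m A T).Adj (.inl w) (.inl v)} ∪ Set.range (fun p => .inr (w, p)) := by
    ext (v | ⟨w', p⟩)
    · simp
    · simp [eq_comm]
  rw [degOf, hnbhd, Set.ncard_union_eq (by simp [Set.disjoint_left]),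
    Set.ncard_image_of_injective _ Sum.inl_injective,
    Set.ncard_range_of_injective (fun p q h => by simpa using h)]
  simp

lemma ncard_adj_inl_inl_le (hm : 0 < m) (w : Word m A) :
    {v | (graph m A T).Adj (.inl w) (.inl v)}.ncard ≤ 2 * A :=
  calc _ ≤ ({v | IsShiftBy 1 w v} ∪ {v | IsShiftBy 1 v w}).ncard :=
        Set.ncard_le_ncard fun v hv => hv.2
    _ ≤ A + A := (Set.ncard_union_le _ _).trans (add_le_add
        (ncard_outShifts_le hm w) (ncard_inShifts_le hm w))
    _ = 2 * A := (two_mul A).symm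

lemma IsShiftBy.exists_walk {k : ℕ} {u v : Word m A} (h : IsShiftBy k u v) :
    ∃ p : (graph m A T).Walk (.inl u) (.inl v), p.length ≤ k := by
  induction k generalizing u with
  | zero =>
    obtain rfl := h.eq
    exact ⟨.nil, le_rfl⟩
  | succ k ih =>
    obtain ⟨w, huw, hwv⟩ := h.exists_isShiftBy_one
    obtain ⟨p, hp⟩ := ih hwv
    by_cases heq : u = w
    · subst heq
      exact ⟨p, by omega⟩
    · exact ⟨.cons ((adj_inl_inl).2 ⟨heq, .inl huw⟩) p, by simp [hp]⟩

lemma exists_walk_to_inl (x : Vertex m A T) :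
    ∃ (w : Word m A) (p : (graph m A T).Walk x (.inl w)), p.length ≤ 1 := by
  rcases x with w | ⟨w, p⟩
  · exact ⟨w, .nil, by simp⟩
  · exact ⟨w, .cons ((adj_inr_inl).2 rfl) .nil, by simp⟩

lemma exists_walk_length_le (x y : Vertex m A T) :
    ∃ p : (graph m A T).Walk x y, p.length ≤ m + 2 := by
  obtain ⟨u, p, hp⟩ := exists_walk_to_inl x
  obtain ⟨v, q, hq⟩ := exists_walk_to_inl y
  obtain ⟨s, hs⟩ := (isShiftBy_length u v).exists_walk (T := T)
  exact ⟨p.append (s.append q.reverse), by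
    simp only [Walk.length_append, Walk.length_reverse]; omega⟩

lemma maxDeg_graph_le (hm : 0 < m) (hA : 0 < A) : maxDeg (graph m A T) ≤ 2 * A + T * m := by
  have : Nonempty (Vertex m A T) := ⟨.inl fun _ => ⟨0, hA⟩⟩
  refine maxDeg_le _ fun x => ?_
  rcases x with w | ⟨w, t, i⟩
  · rw [degOf_inl]
    exact Nat.add_le_add_right (ncard_adj_inl_inl_le hm w) _
  · rw [degOf_inr]
    exact le_add_left (Nat.le_mul_of_pos_left m t.pos)

lemma mul_le_maxDeg_graph (hA : 0 < A) : T * m ≤ maxDeg (graph m A T) :=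
  calc T * m ≤ degOf (graph m A T) (.inl fun _ => ⟨0, hA⟩) := by rw [degOf_inl]; omega
    _ ≤ maxDeg (graph m A T) := degOf_le_maxDeg _ _

lemma minDeg_graph (hm : 0 < m) (hA : 0 < A) (hT : 0 < T) : minDeg (graph m A T) = m := by
  refine minDeg_eq _ (fun x => ?_) (.inr (fun _ => ⟨0, hA⟩, ⟨0, hT⟩, ⟨0, hm⟩)) (degOf_inr _ _ _)
  rcases x with w | ⟨w, t, i⟩
  · rw [degOf_inl]
    exact le_add_left (Nat.le_mul_of_pos_left m hT)
  · rw [degOf_inr]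

lemma ncard_range_inr : (Set.range (Sum.inr : _ → Vertex m A T)).ncard = A ^ m * T * m := by
  rw [Set.ncard_range_of_injective Sum.inr_injective]
  simp [mul_assoc]

theorem not_exists_isRDistSetDist {N C₀ : ℕ} (hm : 7 ≤ m) (hN : 0 < N) (hC₀ : C₀ ≤ N) :
    ¬ ∃ (cv : Vertex m (N * m ^ 2) (2 * N) → ℕ) (ce : Sym2 _ → ℕ),
      IsRDistSetDist (graph m (N * m ^ 2) (2 * N)) (m + 2)
        (maxDeg (graph m (N * m ^ 2) (2 * N)) + C₀) cv ce := by
  rintro ⟨cv, ce, h⟩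
  have hpos : 0 < N * m ^ 2 := by positivity
  have hcount := h.ncard_le_choose exists_walk_length_le (S := Set.range Sum.inr) (d := m)
    (by rintro _ ⟨⟨w, t, i⟩, rfl⟩; exact degOf_inr w t i)
  have hk : maxDeg (graph m (N * m ^ 2) (2 * N)) + C₀ ≤ 3 * N * m ^ 2 := by
    have := maxDeg_graph_le (m := m) (T := 2 * N) (by omega) hpos
    nlinarith
  have hchoose := choose_lt_of_le_three_mul_sq hm hN hk
  have hsize : (N * m ^ 2) ^ m * (2 * N) * m = 2 * N ^ (m + 1) * m ^ (2 * m + 1) := by ring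
  rw [ncard_range_inr, hsize] at hcount
  omega

theorem exists_graph_not_isRDistSetDist {m : ℕ} (hm : 7 ≤ m) (C₀ M : ℕ) :
    ∃ (V : Type) (_ : Fintype V) (G : SimpleGraph V),
      M ≤ maxDeg G ∧ minDeg G = m ∧
      (∀ u v : V, ∃ p : G.Walk u v, p.length ≤ m + 2) ∧
      ¬ ∃ (cv : V → ℕ) (ce : Sym2 V → ℕ), IsRDistSetDist G (m + 2) (maxDeg G + C₀) cv ce := by
  set N := max (max M C₀) 1
  have hMN : M ≤ N := le_max_of_le_left (le_max_left _ _)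
  have hpos : 0 < N * m ^ 2 := by positivity
  refine ⟨_, inferInstance, graph m (N * m ^ 2) (2 * N), ?_, minDeg_graph (by omega) hpos
    (by omega), exists_walk_length_le, not_exists_isRDistSetDist hm (by omega) (by omega)⟩
  have := mul_le_maxDeg_graph (m := m) (T := 2 * N) hpos
  nlinarith

end DeBruijn

theorem stmt_14 (r : ℕ) (hr : 9 ≤ r) (C₀ : ℕ) :
    (∀ M : ℕ, ∃ (V : Type) (_ : Fintype V) (G : SimpleGraph V),
      M ≤ maxDeg G ∧ minDeg G = r - 2 ∧
      (∀ u v : V, ∃ p : G.Walk u v, p.length ≤ r) ∧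
      ¬ ∃ (cv : V → ℕ) (ce : Sym2 V → ℕ), IsRDistSetDist G r (maxDeg G + C₀) cv ce) ∧
    ∀ δ₀ : ℕ,
      (∀ (V : Type) (_ : Fintype V) (G : SimpleGraph V), δ₀ ≤ minDeg G →
        ∃ (cv : V → ℕ) (ce : Sym2 V → ℕ), IsRDistSetDist G r (maxDeg G + C₀) cv ce) →
      r - 1 ≤ δ₀ := by
  obtain ⟨m, rfl⟩ : ∃ m, r = m + 2 := ⟨r - 2, by omega⟩
  have family := DeBruijn.exists_graph_not_isRDistSetDist (m := m) (by omega) C₀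
  refine ⟨by simpa using family, fun δ₀ hδ₀ => ?_⟩
  by_contra! hlt
  obtain ⟨V, hV, G, -, hmin, -, hG⟩ := family 0
  exact hG (hδ₀ V hV G (by omega))
end

section
/- Let A₁,…,Aₙ be events in a probability space such that each A_i is mutually independent of all but at most D of the other events, and Pr(A_i) ≤ p for all i. If e·p·(D+1) ≤ 1 then Pr(⋂ᵢ complement(A_i)) > 0. -/
/-!
Write `B S = ⋂ j ∈ S, (A j)ᶜ`. This is the asymmetric local lemma with all weights
`x = 1/(D+2)`: by strong induction on `S`, `P(A i ∩ B S) ≤ x P(B S)` for `i ∉ S`. Split `S` into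
`S \ T i`, from which `A i` is independent (independence of the generating π-system passes to
the generated σ-algebra, which contains `B (S \ T i)`), and `S ∩ T i`, whose at most `D` events
each cost a factor `1 - x` by the induction hypothesis. Peeling the events off one at a time
then gives `P(B univ) ≥ (1 - x)^n > 0`; the hypothesis `e p (D+1) ≤ 1` suffices because
`(1 + 1/(D+1))^(D+1) ≤ e` gives `p ≤ x (1-x)^D`.
-/

open MeasureTheory ProbabilityTheory MeasurableSpace

theorem inv_exp_one_mul_succ_le (D : ℕ) :
    (Real.exp 1 * (D + 1))⁻¹ ≤ ((D : ℝ) + 2)⁻¹ * (1 - ((D : ℝ) + 2)⁻¹) ^ D := by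
  have hb : ((D : ℝ) + 2) / (D + 1) = 1 + ((D : ℝ) + 1)⁻¹ := by field_simp; ring
  have he : ((D + 2) / (D + 1) : ℝ) ^ (D + 1) ≤ Real.exp 1 := by
    simpa [hb] using Real.one_add_inv_pow_le_exp (n := D + 1)
  have hsub : 1 - ((D : ℝ) + 2)⁻¹ = (D + 1) / (D + 2) := by field_simp; ring
  rw [div_pow, div_le_iff₀ (by positivity)] at he
  rw [hsub, div_pow, ← div_eq_inv_mul, div_div, ← pow_succ, inv_le_comm₀ (by positivity)
    (by positivity), inv_div, div_le_iff₀ (by positivity)]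
  calc _ ≤ _ := he
    _ = _ := by ring

section LocalLemma

variable {Ω ι : Type*} [MeasurableSpace Ω] {μ : Measure Ω} {A : ι → Set Ω}

theorem indep_generateFrom_of_measure_inter_biInter_eq [IsProbabilityMeasure μ]
    (hA : ∀ j, MeasurableSet (A j)) {i : ι} {K : Set ι}
    (hind : ∀ J : Finset ι, ↑J ⊆ K → μ (A i ∩ ⋂ j ∈ J, A j) = μ (A i) * μ (⋂ j ∈ J, A j)) :
    Indep (generateFrom {A i}) (generateFrom {t | ∃ j ∈ K, A j = t}) μ := by
  refine IndepSets.indep (generateFrom_le (by simpa using hA i))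
    (generateFrom_le (by rintro _ ⟨j, -, rfl⟩; exact hA j)) (.singleton _)
    (isPiSystem_piiUnionInter _ (fun _ ↦ .singleton _) K) rfl
    (generateFrom_piiUnionInter_singleton_left A K).symm ?_
  rw [IndepSets_iff, piiUnionInter_singleton_left]
  rintro _ _ rfl ⟨J, hJ, rfl⟩
  exact hind J hJ

theorem measureReal_inter_biInter_compl_eq_mul [IsProbabilityMeasure μ]
    (hA : ∀ j, MeasurableSet (A j)) {i : ι} {K : Set ι}
    (hind : ∀ J : Finset ι, ↑J ⊆ K → μ (A i ∩ ⋂ j ∈ J, A j) = μ (A i) * μ (⋂ j ∈ J, A j))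
    {S : Finset ι} (hS : ↑S ⊆ K) :
    μ.real (A i ∩ ⋂ j ∈ S, (A j)ᶜ) = μ.real (A i) * μ.real (⋂ j ∈ S, (A j)ᶜ) := by
  have hmeas : MeasurableSet[generateFrom {t | ∃ j ∈ K, A j = t}] (⋂ j ∈ S, (A j)ᶜ) :=
    Finset.measurableSet_biInter _ fun j hj ↦ (measurableSet_generateFrom
      (show A j ∈ {t | ∃ j ∈ K, A j = t} from ⟨j, hS hj, rfl⟩)).compl
  rw [measureReal_def, measureReal_def, measureReal_def, ← ENNReal.toReal_mul,
    (Indep_iff _ _ μ).1 (indep_generateFrom_of_measure_inter_biInter_eq hA hind) _ _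
      (measurableSet_generateFrom rfl) hmeas]

variable [DecidableEq ι]

theorem one_sub_mul_measureReal_le_biInter_insert_compl [IsFiniteMeasure μ] {k : ι}
    (hA : MeasurableSet (A k)) {W : Finset ι} {x : ℝ}
    (h : μ.real (A k ∩ ⋂ j ∈ W, (A j)ᶜ) ≤ x * μ.real (⋂ j ∈ W, (A j)ᶜ)) :
    (1 - x) * μ.real (⋂ j ∈ W, (A j)ᶜ) ≤ μ.real (⋂ j ∈ insert k W, (A j)ᶜ) := by
  rw [Finset.set_biInter_insert, Set.inter_comm, ← Set.sdiff_eq]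
  rw [Set.inter_comm] at h
  linarith [measureReal_inter_add_sdiff (μ := μ) (s := ⋂ j ∈ W, (A j)ᶜ) hA]

theorem prod_one_sub_mul_measureReal_le [IsFiniteMeasure μ] (hA : ∀ j, MeasurableSet (A j))
    {x : ι → ℝ} (hx : ∀ j, x j ≤ 1) {V U : Finset ι} (hVU : Disjoint V U)
    (h : ∀ k ∈ U, ∀ W ⊆ V ∪ U, k ∉ W →
      μ.real (A k ∩ ⋂ j ∈ W, (A j)ᶜ) ≤ x k * μ.real (⋂ j ∈ W, (A j)ᶜ)) :
    (∏ k ∈ U, (1 - x k)) * μ.real (⋂ j ∈ V, (A j)ᶜ) ≤ μ.real (⋂ j ∈ V ∪ U, (A j)ᶜ) := by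
  induction U using Finset.induction_on with
  | empty => simp
  | insert k U hk ih =>
    have hkV : k ∉ V := Finset.disjoint_right.1 hVU (Finset.mem_insert_self k U)
    have ih := ih (Finset.disjoint_of_subset_right (Finset.subset_insert k U) hVU)
      fun l hl W hW ↦ h l (Finset.mem_insert_of_mem hl) W
        (hW.trans (Finset.union_subset_union_right (Finset.subset_insert k U)))
    rw [Finset.prod_insert hk, mul_assoc, Finset.union_insert]
    calc _ ≤ (1 - x k) * μ.real (⋂ j ∈ V ∪ U, (A j)ᶜ) :=
          mul_le_mul_of_nonneg_left ih (sub_nonneg.2 (hx k))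
      _ ≤ _ := one_sub_mul_measureReal_le_biInter_insert_compl (hA k) <|
          h k (Finset.mem_insert_self k U) _
            (Finset.union_subset_union_right (Finset.subset_insert k U))
            (by simp [hkV, hk])

theorem measureReal_inter_biInter_compl_le_mul [IsFiniteMeasure μ] (hA : ∀ j, MeasurableSet (A j))
    {T : ι → Finset ι}
    (hind : ∀ i (S : Finset ι), (∀ j ∈ S, j ≠ i ∧ j ∉ T i) →
      μ.real (A i ∩ ⋂ j ∈ S, (A j)ᶜ) = μ.real (A i) * μ.real (⋂ j ∈ S, (A j)ᶜ))
    {x : ι → ℝ} (hx0 : ∀ i, 0 ≤ x i) (hx1 : ∀ i, x i ≤ 1)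
    (hAx : ∀ i, μ.real (A i) ≤ x i * ∏ j ∈ T i, (1 - x j)) (S : Finset ι) {i : ι} (hi : i ∉ S) :
    μ.real (A i ∩ ⋂ j ∈ S, (A j)ᶜ) ≤ x i * μ.real (⋂ j ∈ S, (A j)ᶜ) := by
  induction S using Finset.strongInduction generalizing i with
  | H S ih =>
  have hB : (∏ j ∈ S ∩ T i, (1 - x j)) * μ.real (⋂ j ∈ S \ T i, (A j)ᶜ)
      ≤ μ.real (⋂ j ∈ S, (A j)ᶜ) := by
    have := prod_one_sub_mul_measureReal_le hA hx1 (Finset.disjoint_sdiff_inter S (T i))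
      fun k hk W hW hkW ↦ ih W ?_ hkW
    · rwa [Finset.sdiff_union_inter] at this
    · rw [Finset.sdiff_union_inter] at hW
      exact Finset.ssubset_iff_subset_ne.2
        ⟨hW, by rintro rfl; exact hkW (Finset.inter_subset_left hk)⟩
  calc μ.real (A i ∩ ⋂ j ∈ S, (A j)ᶜ) ≤ μ.real (A i ∩ ⋂ j ∈ S \ T i, (A j)ᶜ) :=
        measureReal_mono (Set.inter_subset_inter_right _ <|
          Set.biInter_subset_biInter_left (Finset.coe_subset.2 Finset.sdiff_subset))
    _ = μ.real (A i) * μ.real (⋂ j ∈ S \ T i, (A j)ᶜ) :=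
        hind i _ fun j hj ↦ ⟨by rintro rfl; exact hi (Finset.mem_sdiff.1 hj).1,
          (Finset.mem_sdiff.1 hj).2⟩
    _ ≤ x i * (∏ j ∈ T i, (1 - x j)) * μ.real (⋂ j ∈ S \ T i, (A j)ᶜ) := by gcongr; exact hAx i
    _ ≤ x i * (∏ j ∈ S ∩ T i, (1 - x j)) * μ.real (⋂ j ∈ S \ T i, (A j)ᶜ) := by
        gcongr x i * ?_ * _
        · exact hx0 i
        · exact Finset.prod_le_prod_of_subset_of_le_one Finset.inter_subset_right
            (fun j _ ↦ sub_nonneg.2 (hx1 j)) fun j _ _ ↦ sub_le_self _ (hx0 j)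
    _ ≤ x i * μ.real (⋂ j ∈ S, (A j)ᶜ) := by rw [mul_assoc]; gcongr; exact hx0 i

theorem prod_one_sub_le_measureReal_iInter_compl [Fintype ι] [IsProbabilityMeasure μ]
    (hA : ∀ j, MeasurableSet (A j)) {T : ι → Finset ι}
    (hind : ∀ i (J : Finset ι), (∀ j ∈ J, j ≠ i ∧ j ∉ T i) →
      μ (A i ∩ ⋂ j ∈ J, A j) = μ (A i) * μ (⋂ j ∈ J, A j))
    {x : ι → ℝ} (hx0 : ∀ i, 0 ≤ x i) (hx1 : ∀ i, x i ≤ 1)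
    (hAx : ∀ i, μ.real (A i) ≤ x i * ∏ j ∈ T i, (1 - x j)) :
    ∏ i, (1 - x i) ≤ μ.real (⋂ i, (A i)ᶜ) := by
  have hind' i S (hS : ∀ j ∈ S, j ≠ i ∧ j ∉ T i) :=
    measureReal_inter_biInter_compl_eq_mul (S := S) hA (K := {j | j ≠ i ∧ j ∉ T i})
      (hind i) hS
  simpa using prod_one_sub_mul_measureReal_le hA hx1 (Finset.disjoint_empty_left Finset.univ)
    fun k _ W _ hkW ↦ measureReal_inter_biInter_compl_le_mul hA hind' hx0 hx1 hAx W hkW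

end LocalLemma

/-- The symmetric Lovász Local Lemma. Each event `A i` is mutually independent of all
the other events except those indexed by a set `T i` of size at most `D`; mutual
independence of `A i` from a family of events means that `A i` is independent of every
intersection of events from that family. -/
theorem stmt_16 {Ω : Type*} [MeasurableSpace Ω] (μ : Measure Ω) [IsProbabilityMeasure μ]
    (n : ℕ) (A : Fin n → Set Ω) (hA : ∀ i, MeasurableSet (A i))
    (D : ℕ) (p : ℝ)
    (hdep : ∀ i, ∃ T : Finset (Fin n), i ∉ T ∧ T.card ≤ D ∧
      ∀ J : Finset (Fin n), (∀ j ∈ J, j ≠ i ∧ j ∉ T) →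
        μ (A i ∩ ⋂ j ∈ J, A j) = μ (A i) * μ (⋂ j ∈ J, A j))
    (hp : ∀ i, μ (A i) ≤ ENNReal.ofReal p)
    (h : Real.exp 1 * p * (D + 1) ≤ 1) :
    0 < μ (⋂ i, (A i)ᶜ) := by
  choose T _ hTD hT using hdep
  set x : ℝ := ((D : ℝ) + 2)⁻¹
  have hx0 : 0 ≤ x := by positivity
  have hx1 : x < 1 := inv_lt_one_of_one_lt₀ (by linarith [(D.cast_nonneg : (0 : ℝ) ≤ D)])
  have hpx : p ≤ x * (1 - x) ^ D := by
    refine le_trans ?_ (inv_exp_one_mul_succ_le D)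
    rw [← one_div, le_div_iff₀ (by positivity)]
    linarith
  have hAx i : μ.real (A i) ≤ x * ∏ _ ∈ T i, (1 - x) := by
    rw [Finset.prod_const]
    refine ENNReal.toReal_le_of_le_ofReal (by positivity)
      ((hp i).trans (ENNReal.ofReal_le_ofReal (hpx.trans ?_)))
    exact mul_le_mul_of_nonneg_left
      (pow_le_pow_of_le_one (sub_nonneg.2 hx1.le) (sub_le_self _ hx0) (hTD i)) hx0
  have hpos : 0 < μ.real (⋂ i, (A i)ᶜ) :=
    (Finset.prod_pos fun _ _ ↦ sub_pos.2 hx1).trans_le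
      (prod_one_sub_le_measureReal_iInter_compl hA hT (fun _ ↦ hx0) (fun _ ↦ hx1.le) hAx)
  exact pos_iff_ne_zero.2 ((measureReal_ne_zero_iff).1 hpos.ne')
end
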